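/- arXiv:2309.16872 — 2 statements merged into one kernel-verified Lean document; each statement's English description precedes it below -/
import Mathlib

section
/- Let K ⊆ ℝⁿ be a convex body, W ⊆ ℝⁿ a linear subspace, and u ∈ W \ {0}. Then the touching cone satisfies T_W(π_W(K), u) = W ∩ T(K,u) and the touching space satisfies TS_W(π_W(K), u) = π_W(TS(K,u)). -/
open Set MeasureTheory Metric
open scoped Pointwise

noncomputable section

abbrev Euc (n : ℕ) := EuclideanSpace ℝ (Fin n)

/-- Support function of a set. -/
def suppFn {n : ℕ} (K : Set (Euc n)) (u : Euc n) : ℝ :=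
  sSup ((fun x => (inner ℝ x u : ℝ)) '' K)

/-- Support set `F(K, u)`. -/
def suppSet {n : ℕ} (K : Set (Euc n)) (u : Euc n) : Set (Euc n) :=
  {x ∈ K | (inner ℝ x u : ℝ) = suppFn K u}

/-- `F` is a face of the convex set `A`. -/
def IsFaceOf {n : ℕ} (F A : Set (Euc n)) : Prop :=
  F ⊆ A ∧ Convex ℝ F ∧
    ∀ x ∈ A, ∀ y ∈ A, (F ∩ openSegment ℝ x y).Nonempty → segment ℝ x y ⊆ F

/-- Normal cone of `K` at `S`, within the subspace `V`. -/
def normalConeIn {n : ℕ} (V : Submodule ℝ (Euc n)) (K S : Set (Euc n)) : Set (Euc n) :=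
  {u | u ∈ V ∧ u ≠ 0 ∧ S ⊆ suppSet K u} ∪ {0}

/-- `T` is the touching cone of `K` in direction `u` within `V`. -/
def IsTouchingConeIn {n : ℕ} (V : Submodule ℝ (Euc n)) (K : Set (Euc n)) (u : Euc n)
    (T : Set (Euc n)) : Prop :=
  IsFaceOf T (normalConeIn V K (suppSet K u)) ∧ u ∈ intrinsicInterior ℝ T

/-- Orthogonal complement (within `V`) of a set `T`. -/
def orthIn {n : ℕ} (V : Submodule ℝ (Euc n)) (T : Set (Euc n)) : Set (Euc n) :=
  {x | x ∈ V ∧ ∀ t ∈ T, (inner ℝ x t : ℝ) = 0}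

/-- Orthogonal projection onto a subspace, as a map of the ambient space. -/
def projW {n : ℕ} (W : Submodule ℝ (Euc n)) (x : Euc n) : Euc n :=
  (W.orthogonalProjectionOnto x : Euc n)

/-- The cone of `c`-cusp directions. -/
def cuspCone {n : ℕ} (c : ℝ) (u : Euc n) : Set (Euc n) :=
  {y | (inner ℝ y u : ℝ) ≤ -c * ‖y‖}

/-- `K` has a `c`-cusp in direction `u`. -/
def HasCusp {n : ℕ} (K : Set (Euc n)) (c : ℝ) (u : Euc n) : Prop :=
  ∃ x ∈ K, K ⊆ x +ᵥ cuspCone c u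

/-- `f` is linear on `A`. -/
def LinearOn {n : ℕ} (f : Euc n → ℝ) (A : Set (Euc n)) : Prop :=
  ∃ w, ∀ x ∈ A, f x = (inner ℝ x w : ℝ)

/-- A tuple of nonempty sets is semicritical. -/
def Semicritical {n ℓ : ℕ} (A : Fin ℓ → Set (Euc n)) : Prop :=
  ∀ I : Finset (Fin ℓ), I.Nonempty →
    I.card ≤ Module.finrank ℝ (Submodule.span ℝ (∑ i ∈ I, (A i - A i)) : Submodule ℝ (Euc n))

/-- Support of a measure on a topological space. -/
def measSupport {α : Type*} [TopologicalSpace α] [MeasurableSpace α] (μ : Measure α) : Set α :=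
  {x | ∀ U : Set α, IsOpen U → x ∈ U → 0 < μ U}

/-- Mixed volume of an `n`-tuple of sets in `ℝⁿ`, by inclusion–exclusion. -/
def mixedVolume {n : ℕ} (K : Fin n → Set (Euc n)) : ℝ :=
  (∑ I : Finset (Fin n), (-1 : ℝ) ^ (n - I.card) * (volume (∑ i ∈ I, K i)).toReal) / n.factorial

/-- `d`-dimensional mixed volume of a `d`-tuple of sets in `ℝⁿ`, via Hausdorff measure. -/
def mixedVolumeH {n : ℕ} (d : ℕ) (K : Fin d → Set (Euc n)) : ℝ :=
  (∑ I : Finset (Fin d), (-1 : ℝ) ^ (d - I.card) * (μH[d] (∑ i ∈ I, K i)).toReal) / d.factorial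

/-- `S` is the mixed area measure of the tuple `K`. -/
def IsMixedAreaMeasure {m : ℕ} (K : Fin m → Set (Euc (m + 1)))
    (S : Measure (Metric.sphere (0 : Euc (m + 1)) 1)) : Prop :=
  ∀ L : Set (Euc (m + 1)), Convex ℝ L → IsCompact L → L.Nonempty →
    mixedVolume (Fin.snoc K L) = ((m : ℝ) + 1)⁻¹ * ∫ u, suppFn L (u : Euc (m + 1)) ∂S

/-- A tuple of subspaces is semicritical. -/
def SemicriticalSub {n ℓ : ℕ} (V : Fin ℓ → Submodule ℝ (Euc n)) : Prop :=
  ∀ I : Finset (Fin ℓ), I.Nonempty → I.card ≤ Module.finrank ℝ (I.sup V : Submodule ℝ (Euc n))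

end


noncomputable section AuxProofs

open scoped RealInnerProductSpace

variable {n : ℕ}

/-- From a point in the intrinsic interior, one can move a bit in any direction of the
affine span and stay in the set. -/
lemma mem_of_intrinsicInterior_dir {F : Set (Euc n)} {u d : Euc n}
    (hu : u ∈ intrinsicInterior ℝ F) (hd : d ∈ (affineSpan ℝ F).direction) :
    ∃ δ : ℝ, 0 < δ ∧ u + δ • d ∈ F := by
  rw [mem_intrinsicInterior] at hu
  obtain ⟨uu, huu, rfl⟩ := hu
  rw [mem_interior_iff_mem_nhds, Metric.mem_nhds_iff] at huu
  obtain ⟨ε, hε, hball⟩ := huu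
  by_cases hd0 : d = 0
  · refine ⟨1, one_pos, ?_⟩
    have : uu ∈ ((↑) ⁻¹' F : Set (affineSpan ℝ F)) := hball (Metric.mem_ball_self hε)
    simpa [hd0] using this
  · have hdn : 0 < ‖d‖ := norm_pos_iff.mpr hd0
    set δ : ℝ := ε / (2 * ‖d‖) with hδdef
    have hδ : 0 < δ := by positivity
    refine ⟨δ, hδ, ?_⟩
    have hpmem : (↑uu : Euc n) + δ • d ∈ affineSpan ℝ F := by
      have := AffineSubspace.vadd_mem_of_mem_direction
        (Submodule.smul_mem _ δ hd) uu.2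
      simpa [vadd_eq_add, add_comm] using this
    have hdist : dist (⟨(↑uu : Euc n) + δ • d, hpmem⟩ : affineSpan ℝ F) uu < ε := by
      rw [Subtype.dist_eq]
      simp only [dist_eq_norm]
      have : (↑uu : Euc n) + δ • d - ↑uu = δ • d := by abel
      rw [this, norm_smul]
      simp only [Real.norm_eq_abs, abs_of_pos hδ]
      rw [hδdef]
      rw [div_mul_eq_mul_div, mul_comm]
      rw [mul_comm (2:ℝ) ‖d‖, mul_div_assoc]
      have : ε / 2 < ε := by linarith
      calc ‖d‖ * (ε / (‖d‖ * 2)) = ε / 2 := by field_simp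
        _ < ε := this
    exact hball hdist

/-- Prolongation: a point of the intrinsic interior is in the open segment from any point
of the set to some other point of the set, which moreover has an explicit form. -/
lemma prolong {F : Set (Euc n)} {u x : Euc n}
    (hu : u ∈ intrinsicInterior ℝ F) (hx : x ∈ F) :
    ∃ y ∈ F, u ∈ openSegment ℝ x y ∧ ∃ δ : ℝ, 0 < δ ∧ y = u + δ • (u - x) := by
  have huF : u ∈ F := intrinsicInterior_subset hu
  have hd : u - x ∈ (affineSpan ℝ F).direction := by
    have := AffineSubspace.vsub_mem_direction
      (subset_affineSpan ℝ F huF) (subset_affineSpan ℝ F hx)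
    simpa using this
  obtain ⟨δ, hδ, hy⟩ := mem_of_intrinsicInterior_dir hu hd
  refine ⟨u + δ • (u - x), hy, ?_, δ, hδ, rfl⟩
  have h1δ : (0:ℝ) < 1 + δ := by linarith
  refine ⟨δ / (1 + δ), 1 / (1 + δ), by positivity, by positivity, ?_, ?_⟩
  · field_simp; ring
  · have hne : (1:ℝ) + δ ≠ 0 := h1δ.ne'
    match_scalars <;> field_simp <;> ring

/-- If `u` lies in the intrinsic interior of a face `F₁` and in a face `F₂`, then `F₁ ⊆ F₂`. -/
lemma face_sub {C F₁ F₂ : Set (Euc n)} {u : Euc n}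
    (h1 : IsFaceOf F₁ C) (h2 : IsFaceOf F₂ C)
    (hu1 : u ∈ intrinsicInterior ℝ F₁) (hu2 : u ∈ F₂) : F₁ ⊆ F₂ := by
  intro x hx
  obtain ⟨y, hyF, huseg, _⟩ := prolong hu1 hx
  exact h2.2.2 x (h1.1 hx) y (h1.1 hyF) ⟨u, hu2, huseg⟩ (left_mem_segment ℝ x y)

lemma face_inter {F A : Set (Euc n)} (W : Submodule ℝ (Euc n)) (h : IsFaceOf F A) :
    IsFaceOf ((W : Set (Euc n)) ∩ F) ((W : Set (Euc n)) ∩ A) := by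
  refine ⟨inter_subset_inter_right _ h.1, (W.convex).inter h.2.1, ?_⟩
  rintro x hx y hy ⟨z, hz1, hz2⟩
  intro p hp
  exact ⟨(W.convex).segment_subset hx.1 hy.1 hp, h.2.2 x hx.2 y hy.2 ⟨z, hz1.2, hz2⟩ hp⟩

lemma proj_inner {W : Submodule ℝ (Euc n)} {v : Euc n} (hv : v ∈ W) (x : Euc n) :
    (inner ℝ (projW W x) v : ℝ) = inner ℝ x v := by
  have h := Submodule.starProjection_inner_eq_zero (K := W) x v hv
  rw [inner_sub_left, sub_eq_zero] at h
  exact h.symm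

lemma suppFn_proj {W : Submodule ℝ (Euc n)} {v : Euc n} (hv : v ∈ W) (K : Set (Euc n)) :
    suppFn (projW W '' K) v = suppFn K v := by
  unfold suppFn
  rw [image_image]
  congr 1
  exact image_congr fun x _ => proj_inner hv x

lemma suppSet_proj {W : Submodule ℝ (Euc n)} {v : Euc n} (hv : v ∈ W) (K : Set (Euc n)) :
    suppSet (projW W '' K) v = projW W '' suppSet K v := by
  ext z
  constructor
  · rintro ⟨⟨x, hx, rfl⟩, h2⟩
    refine ⟨x, ⟨hx, ?_⟩, rfl⟩
    rw [← proj_inner hv x, h2, suppFn_proj hv]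
  · rintro ⟨x, ⟨hxK, hxs⟩, rfl⟩
    exact ⟨mem_image_of_mem _ hxK, by rw [proj_inner hv x, hxs, suppFn_proj hv]⟩

lemma suppSet_sub_iff {W : Submodule ℝ (Euc n)} {u v : Euc n} (huW : u ∈ W) (hv : v ∈ W)
    (K : Set (Euc n)) :
    suppSet (projW W '' K) u ⊆ suppSet (projW W '' K) v ↔ suppSet K u ⊆ suppSet K v := by
  rw [suppSet_proj huW, suppSet_proj hv]
  constructor
  · intro hs s hsu
    obtain ⟨s', hs', heq⟩ := hs (mem_image_of_mem _ hsu)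
    refine ⟨hsu.1, ?_⟩
    calc (inner ℝ s v : ℝ) = inner ℝ (projW W s) v := (proj_inner hv s).symm
      _ = inner ℝ (projW W s') v := by rw [heq]
      _ = inner ℝ s' v := proj_inner hv s'
      _ = suppFn K v := hs'.2
  · exact fun hs => image_mono hs

/-- The normal cone of the projected body within `W` equals `W` intersected with the
ambient normal cone. -/
lemma normalCone_proj {W : Submodule ℝ (Euc n)} {u : Euc n} (huW : u ∈ W) (K : Set (Euc n)) :
    normalConeIn W (projW W '' K) (suppSet (projW W '' K) u)
      = (W : Set (Euc n)) ∩ normalConeIn ⊤ K (suppSet K u) := by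
  ext v
  simp only [normalConeIn, mem_union, mem_setOf_eq, mem_inter_iff, mem_singleton_iff,
    SetLike.mem_coe, Submodule.mem_top, true_and]
  constructor
  · rintro (⟨hvW, hv0, hsub⟩ | rfl)
    · exact ⟨hvW, Or.inl ⟨hv0, (suppSet_sub_iff huW hvW K).mp hsub⟩⟩
    · exact ⟨W.zero_mem, Or.inr rfl⟩
  · rintro ⟨hvW, (⟨hv0, hsub⟩ | rfl)⟩
    · exact Or.inl ⟨hvW, hv0, (suppSet_sub_iff huW hvW K).mpr hsub⟩
    · exact Or.inr rfl

lemma mem_orthogonal_span_iff {T : Set (Euc n)} {x : Euc n} :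
    x ∈ (Submodule.span ℝ T)ᗮ ↔ ∀ t ∈ T, (inner ℝ x t : ℝ) = 0 := by
  rw [Submodule.mem_orthogonal']
  constructor
  · exact fun h t ht => h t (Submodule.subset_span ht)
  · intro h v hv
    induction hv using Submodule.span_induction with
    | mem t ht => exact h t ht
    | zero => simp
    | add a b _ _ ha hb => rw [inner_add_right, ha, hb, add_zero]
    | smul c a _ ha => rw [inner_smul_right, ha, mul_zero]

end AuxProofs

/-- Touching cones and touching spaces behave well under orthogonal projection:
`T_W(π_W K, u) = W ∩ T(K, u)` and `TS_W(π_W K, u) = π_W (TS(K, u))`. -/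
theorem touchingCone_proj {n : ℕ} (K : Set (Euc n)) (hKconv : Convex ℝ K)
    (hKcomp : IsCompact K) (hKne : K.Nonempty)
    (W : Submodule ℝ (Euc n)) (u : Euc n) (huW : u ∈ W) (hu : u ≠ 0)
    (T T' : Set (Euc n))
    (hT : IsTouchingConeIn ⊤ K u T)
    (hT' : IsTouchingConeIn W (projW W '' K) u T') :
    T' = (W : Set (Euc n)) ∩ T ∧ orthIn W T' = projW W '' orthIn ⊤ T := by
  have huT : u ∈ T := intrinsicInterior_subset hT.2
  have huT' : u ∈ T' := intrinsicInterior_subset hT'.2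
  have hN : normalConeIn W (projW W '' K) (suppSet (projW W '' K) u)
      = (W : Set (Euc n)) ∩ normalConeIn ⊤ K (suppSet K u) := normalCone_proj huW K
  have hWT_face : IsFaceOf ((W : Set (Euc n)) ∩ T)
      (normalConeIn W (projW W '' K) (suppSet (projW W '' K) u)) := by
    rw [hN]; exact face_inter W hT.1
  have hsub1 : T' ⊆ (W : Set (Euc n)) ∩ T :=
    face_sub hT'.1 hWT_face hT'.2 ⟨huW, huT⟩
  have hsub2 : (W : Set (Euc n)) ∩ T ⊆ T' := by
    rintro x ⟨hxW, hxT⟩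
    obtain ⟨y, hyT, huseg, δ, hδ, rfl⟩ := prolong hT.2 hxT
    have hyW : u + δ • (u - x) ∈ W := W.add_mem huW (W.smul_mem _ (W.sub_mem huW hxW))
    have hxN : x ∈ normalConeIn W (projW W '' K) (suppSet (projW W '' K) u) := by
      rw [hN]; exact ⟨hxW, hT.1.1 hxT⟩
    have hyN : u + δ • (u - x) ∈ normalConeIn W (projW W '' K)
        (suppSet (projW W '' K) u) := by
      rw [hN]; exact ⟨hyW, hT.1.1 hyT⟩
    exact hT'.1.2.2 x hxN _ hyN ⟨u, huT', huseg⟩ (left_mem_segment ℝ x _)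
  have hTT' : T' = (W : Set (Euc n)) ∩ T := hsub1.antisymm hsub2
  refine ⟨hTT', ?_⟩
  rw [hTT']
  set U := Submodule.span ℝ T with hU
  set M := Submodule.span ℝ ((W : Set (Euc n)) ∩ T) with hM
  have hstepA : W ⊓ U ≤ M := by
    rintro x ⟨hxW, hxU⟩
    have hUle : U ≤ (ℝ ∙ u) ⊔ (affineSpan ℝ T).direction := by
      rw [hU, Submodule.span_le]
      intro t ht
      rw [SetLike.mem_coe, Submodule.mem_sup]
      refine ⟨u, Submodule.mem_span_singleton_self u, t - u, ?_, by abel⟩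
      simpa using AffineSubspace.vsub_mem_direction
        (subset_affineSpan ℝ T ht) (subset_affineSpan ℝ T huT)
    obtain ⟨a, ha, d, hd, rfl⟩ := Submodule.mem_sup.mp (hUle hxU)
    obtain ⟨α, rfl⟩ := Submodule.mem_span_singleton.mp ha
    have hdW : d ∈ W := by
      have h := W.sub_mem hxW (W.smul_mem α huW)
      rwa [add_sub_cancel_left] at h
    obtain ⟨δ, hδ, hyT⟩ := mem_of_intrinsicInterior_dir hT.2 hd
    have hyW : u + δ • d ∈ W := W.add_mem huW (W.smul_mem _ hdW)
    have huM : u ∈ M := Submodule.subset_span ⟨huW, huT⟩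
    have hyM : u + δ • d ∈ M := Submodule.subset_span ⟨hyW, hyT⟩
    have hdM : d ∈ M := by
      have h := M.smul_mem δ⁻¹ (M.sub_mem hyM huM)
      rwa [add_sub_cancel_left, smul_smul, inv_mul_cancel₀ hδ.ne', one_smul] at h
    exact M.add_mem (M.smul_mem α huM) hdM
  ext x
  simp only [orthIn, mem_setOf_eq, mem_image, Submodule.mem_top, true_and]
  constructor
  · rintro ⟨hxW, hxorth⟩
    have hxM : x ∈ Mᗮ := mem_orthogonal_span_iff.mpr hxorth
    have hx2 : x ∈ (W ⊓ U)ᗮ := Submodule.orthogonal_le hstepA hxM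
    have horth : (W ⊓ U)ᗮ = Wᗮ ⊔ Uᗮ := by
      have h1 := Submodule.inf_orthogonal (𝕜 := ℝ) Wᗮ Uᗮ
      rw [Submodule.orthogonal_orthogonal, Submodule.orthogonal_orthogonal] at h1
      rw [h1, Submodule.orthogonal_orthogonal]
    rw [horth] at hx2
    obtain ⟨w, hw, z, hz, rfl⟩ := Submodule.mem_sup.mp hx2
    refine ⟨z, fun t ht => mem_orthogonal_span_iff.mp hz t ht, ?_⟩
    have h2 : W.orthogonalProjectionOnto w = 0 :=
      Submodule.orthogonalProjectionOnto_apply_of_mem_orthogonal hw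
    have h3 : (W.orthogonalProjectionOnto (w + z) : Euc n) = w + z :=
      Submodule.starProjection_eq_self_iff.mpr hxW
    have h4 : (W.orthogonalProjectionOnto z : Euc n)
        = ↑(W.orthogonalProjectionOnto (w + z)) - ↑(W.orthogonalProjectionOnto w) := by
      rw [← Submodule.coe_sub, ← map_sub, show w + z - w = z from by abel]
    unfold projW
    rw [h4, h3, h2]
    simp
  · rintro ⟨z, hzorth, rfl⟩
    refine ⟨SetLike.coe_mem (W.orthogonalProjectionOnto z), fun t ht => ?_⟩
    rw [proj_inner ht.1 z]
    exact hzorth t ht.2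
end

section
/- Let K be a macroid in ℝⁿ with generating measure μ, let u ∈ S^{n-1} and c > 0. Then K has a c-cusp in direction u if and only if every P ∈ supp μ has a c-cusp in direction u. -/
set_option synthInstance.maxHeartbeats 1000000
set_option maxHeartbeats 1000000


open Set MeasureTheory Metric
open scoped Pointwise

noncomputable section AuxMacroid

namespace MacroidAux

open Bornology TopologicalSpace

variable {n : ℕ}

local notation "⟪" x ", " y "⟫" => (inner ℝ x y : ℝ)

lemma bddAbove_aux {K : Set (Euc n)} (hK : IsBounded K) (v : Euc n) :
    BddAbove ((fun x => ⟪x, v⟫) '' K) := by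
  obtain ⟨R, hR⟩ := hK.exists_norm_le
  refine ⟨R * ‖v‖, ?_⟩
  rintro _ ⟨x, hx, rfl⟩
  have h1 := real_inner_le_norm x v
  have h2 := hR x hx
  have h3 := norm_nonneg v
  nlinarith

lemma le_suppFn {K : Set (Euc n)} (hK : IsBounded K) {x : Euc n} (hx : x ∈ K) (v : Euc n) :
    ⟪x, v⟫ ≤ suppFn K v :=
  le_csSup (bddAbove_aux hK v) (Set.mem_image_of_mem _ hx)

lemma suppFn_le {K : Set (Euc n)} (hne : K.Nonempty) {v : Euc n} {a : ℝ}
    (h : ∀ x ∈ K, ⟪x, v⟫ ≤ a) : suppFn K v ≤ a :=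
  csSup_le (hne.image _) (by rintro _ ⟨x, hx, rfl⟩; exact h x hx)

lemma suppFn_exists {K : Set (Euc n)} (hK : IsCompact K) (hne : K.Nonempty) (v : Euc n) :
    ∃ x ∈ K, suppFn K v = ⟪x, v⟫ := by
  have hcont : ContinuousOn (fun x : Euc n => ⟪x, v⟫) K :=
    (continuous_id.inner continuous_const).continuousOn
  obtain ⟨x, hx, hmax⟩ := hK.exists_isMaxOn hne hcont
  exact ⟨x, hx, le_antisymm (suppFn_le hne fun y hy => hmax hy)
    (le_suppFn hK.isBounded hx v)⟩

lemma suppFn_smul {K : Set (Euc n)} (hK : IsBounded K) (hne : K.Nonempty) {t : ℝ}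
    (ht : 0 < t) (v : Euc n) : suppFn K (t • v) = t * suppFn K v := by
  refine le_antisymm (suppFn_le hne fun x hx => ?_) ?_
  · rw [real_inner_smul_right]
    exact mul_le_mul_of_nonneg_left (le_suppFn hK hx v) ht.le
  · have h2 : suppFn K v ≤ t⁻¹ * suppFn K (t • v) := by
      refine suppFn_le hne fun x hx => ?_
      have h3 := le_suppFn hK hx (t • v)
      rw [real_inner_smul_right] at h3
      have h4 : ⟪x, v⟫ = t⁻¹ * (t * ⟪x, v⟫) := by field_simp
      rw [h4]
      exact mul_le_mul_of_nonneg_left h3 (inv_nonneg.mpr ht.le)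
    calc t * suppFn K v ≤ t * (t⁻¹ * suppFn K (t • v)) :=
          mul_le_mul_of_nonneg_left h2 ht.le
      _ = suppFn K (t • v) := by field_simp

lemma suppFn_add_le {K : Set (Euc n)} (hK : IsBounded K) (hne : K.Nonempty) (v w : Euc n) :
    suppFn K (v + w) ≤ suppFn K v + suppFn K w :=
  suppFn_le hne fun x hx => by
    rw [inner_add_right]
    exact add_le_add (le_suppFn hK hx v) (le_suppFn hK hx w)

/-- The polar cone of the cusp cone. -/
def polarD (c : ℝ) (u : Euc n) : Set (Euc n) :=
  {v | ∀ z ∈ cuspCone c u, ⟪z, v⟫ ≤ 0}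

lemma cuspCone_closed (c : ℝ) (u : Euc n) : IsClosed (cuspCone c u) := by
  have : cuspCone c u = {y : Euc n | ⟪y, u⟫ ≤ -c * ‖y‖} := rfl
  rw [this]
  exact isClosed_le (continuous_id.inner continuous_const)
    (continuous_const.mul continuous_norm)

lemma zero_mem_cuspCone (c : ℝ) (u : Euc n) : (0 : Euc n) ∈ cuspCone c u := by
  simp [cuspCone]

/-- The cusp cone as a convex cone. -/
def cuspConeCC (c : ℝ) (hc : 0 ≤ c) (u : Euc n) : ConvexCone ℝ (Euc n) where
  carrier := cuspCone c u
  smul_mem' := by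
    intro t ht y hy
    have hy' : ⟪y, u⟫ ≤ -c * ‖y‖ := hy
    show ⟪t • y, u⟫ ≤ -c * ‖t • y‖
    rw [real_inner_smul_left, norm_smul, Real.norm_eq_abs, abs_of_pos ht]
    nlinarith
  add_mem' := by
    intro y hy z hz
    have hy' : ⟪y, u⟫ ≤ -c * ‖y‖ := hy
    have hz' : ⟪z, u⟫ ≤ -c * ‖z‖ := hz
    show ⟪y + z, u⟫ ≤ -c * ‖y + z‖
    rw [inner_add_left]
    have h1 := norm_add_le y z
    nlinarith

lemma mem_cuspCone_of_polar {c : ℝ} (hc : 0 ≤ c) {u : Euc n} {z : Euc n}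
    (hz : ∀ v ∈ polarD c u, ⟪z, v⟫ ≤ 0) : z ∈ cuspCone c u := by
  by_contra h
  obtain ⟨w, hw1, hw2⟩ := ProperCone.hyperplane_separation' (x₀ := z)
    (⟨(cuspConeCC c hc u).toPointedCone (zero_mem_cuspCone c u), cuspCone_closed c u⟩ :
      ProperCone ℝ (Euc n)) h
  have hmem : -w ∈ polarD c u := by
    intro y hy
    rw [inner_neg_right]
    have := hw1 y hy
    linarith
  have h2 := hz _ hmem
  rw [inner_neg_right] at h2
  linarith

/-- Characterization of having a cusp via additivity of the support function on the polar
cone of the cusp cone. -/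
theorem hasCusp_iff_additive {K : Set (Euc n)} (hKcomp : IsCompact K) (hKne : K.Nonempty)
    {u : Euc n} {c : ℝ} (hc : 0 < c) :
    HasCusp K c u ↔ ∀ v₁ ∈ polarD c u, ∀ v₂ ∈ polarD c u,
      suppFn K (v₁ + v₂) = suppFn K v₁ + suppFn K v₂ := by
  constructor
  · rintro ⟨x, hxK, hsub⟩ v₁ h1 v₂ h2
    have key : ∀ v ∈ polarD c u, suppFn K v = ⟪x, v⟫ := by
      intro v hv
      refine le_antisymm (suppFn_le hKne fun y hy => ?_) (le_suppFn hKcomp.isBounded hxK v)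
      have hyx : -x + y ∈ cuspCone c u := by
        have := hsub hy
        rwa [Set.mem_vadd_set_iff_neg_vadd_mem, vadd_eq_add] at this
      have h3 := hv _ hyx
      rw [inner_add_left, inner_neg_left] at h3
      linarith
    have h12 : v₁ + v₂ ∈ polarD c u := by
      intro z hz
      rw [inner_add_right]
      have := h1 z hz; have := h2 z hz; linarith
    rw [key _ h12, key _ h1, key _ h2, inner_add_right]
  · intro hadd
    obtain ⟨x, hxK, hxmax⟩ := suppFn_exists hKcomp hKne u
    have key : ∀ v ∈ polarD c u, suppFn K v = ⟪x, v⟫ := by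
      intro v hv
      refine le_antisymm ?_ (le_suppFn hKcomp.isBounded hxK v)
      set ε := c / (‖v‖ + 1) with hε
      have hvpos : (0:ℝ) < ‖v‖ + 1 := by positivity
      have hεpos : 0 < ε := div_pos hc hvpos
      have hεv : ε * ‖v‖ ≤ c := by
        rw [hε, div_mul_eq_mul_div, div_le_iff₀ hvpos]
        nlinarith [norm_nonneg v]
      have h1 : u - ε • v ∈ polarD c u := by
        intro z hz
        have hz' : ⟪z, u⟫ ≤ -c * ‖z‖ := hz
        have h2 := abs_real_inner_le_norm z v
        rw [inner_sub_right, real_inner_smul_right]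
        have h3 := abs_le.mp h2
        have h4 := norm_nonneg z
        nlinarith
      have h2 : ε • v ∈ polarD c u := by
        intro z hz
        rw [real_inner_smul_right]
        exact mul_nonpos_of_nonneg_of_nonpos hεpos.le (hv z hz)
      have hadd' := hadd _ h1 _ h2
      rw [sub_add_cancel] at hadd'
      rw [hxmax, suppFn_smul hKcomp.isBounded hKne hεpos v] at hadd'
      have hle := le_suppFn hKcomp.isBounded hxK (u - ε • v)
      rw [inner_sub_right, real_inner_smul_right] at hle
      nlinarith
    refine ⟨x, hxK, fun y hy => ?_⟩
    rw [Set.mem_vadd_set_iff_neg_vadd_mem, vadd_eq_add]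
    refine mem_cuspCone_of_polar hc.le fun v hv => ?_
    have h5 := le_suppFn hKcomp.isBounded hy v
    rw [key v hv] at h5
    rw [inner_add_left, inner_neg_left]
    linarith

/-- `P ↦ suppFn P v` is Lipschitz on convex bodies. -/
lemma suppFn_lipschitz (v : Euc n) :
    LipschitzWith ‖v‖₊ (fun P : ConvexBody (Euc n) => suppFn (P : Set (Euc n)) v) := by
  have main : ∀ P Q : ConvexBody (Euc n),
      suppFn (P : Set (Euc n)) v ≤ suppFn (Q : Set (Euc n)) v + ‖v‖ * dist P Q := by
    intro P Q
    refine le_of_forall_pos_le_add fun δ hδ => ?_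
    have hvpos : (0:ℝ) < ‖v‖ + 1 := by positivity
    set r := dist P Q + δ / (‖v‖ + 1) with hr
    have hrlt : Metric.hausdorffDist (P : Set (Euc n)) (Q : Set (Euc n)) < r := by
      rw [ConvexBody.hausdorffDist_coe, hr]
      have : 0 < δ / (‖v‖ + 1) := div_pos hδ hvpos
      linarith
    refine suppFn_le P.nonempty fun y hy => ?_
    obtain ⟨z, hz, hd⟩ := Metric.exists_dist_lt_of_hausdorffDist_lt hy hrlt
      ConvexBody.hausdorffEdist_ne_top
    have h1 : ⟪y - z, v⟫ ≤ ‖y - z‖ * ‖v‖ := real_inner_le_norm _ _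
    have h2 : ‖y - z‖ < r := by rwa [← dist_eq_norm]
    have h3 := le_suppFn Q.isCompact.isBounded hz v
    have h4 : ⟪y, v⟫ = ⟪z, v⟫ + ⟪y - z, v⟫ := by
      rw [inner_sub_left]; ring
    have h5 : ‖v‖ * r ≤ ‖v‖ * dist P Q + δ := by
      rw [hr, mul_add]
      have : ‖v‖ * (δ / (‖v‖ + 1)) ≤ δ := by
        rw [mul_div_assoc']
        rw [div_le_iff₀ hvpos]
        nlinarith [norm_nonneg v]
      linarith
    have h6 := norm_nonneg v
    nlinarith [dist_nonneg (x := P) (y := Q)]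
  refine LipschitzWith.of_dist_le_mul fun P Q => ?_
  rw [Real.dist_eq, coe_nnnorm]
  rw [abs_sub_le_iff]
  constructor
  · have := main P Q; linarith
  · have := main Q P; rw [dist_comm] at this; linarith

lemma suppFn_continuous (v : Euc n) :
    Continuous (fun P : ConvexBody (Euc n) => suppFn (P : Set (Euc n)) v) :=
  (suppFn_lipschitz v).continuous

instance : SecondCountableTopology (ConvexBody (Euc n)) := by
  have h : Isometry (fun P : ConvexBody (Euc n) =>
      (⟨⟨(P : Set (Euc n)), P.isCompact⟩, P.nonempty⟩ : NonemptyCompacts (Euc n))) := by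
    refine Isometry.of_dist_eq fun P Q => ?_
    rw [NonemptyCompacts.dist_eq]
    exact ConvexBody.hausdorffDist_coe (K := P) (L := Q)
  exact h.isUniformEmbedding.isEmbedding.secondCountableTopology

lemma measSupport_compl_null {α : Type*} [MeasurableSpace α] [TopologicalSpace α]
    [SecondCountableTopology α] [OpensMeasurableSpace α] (μ : Measure α) :
    μ (measSupport μ)ᶜ = 0 := by
  obtain ⟨T, hTc, hTsub, hTU⟩ := TopologicalSpace.isOpen_sUnion_countable
    {s : Set α | IsOpen s ∧ μ s = 0} (fun s hs => hs.1)
  have hsub : (measSupport μ)ᶜ ⊆ ⋃₀ T := by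
    rw [hTU]
    intro x hx
    simp only [measSupport, Set.mem_compl_iff, Set.mem_setOf_eq, not_forall] at hx
    obtain ⟨U, hU, hxU, hμ⟩ := hx
    exact ⟨U, ⟨hU, le_antisymm (not_lt.mp hμ) (zero_le)⟩, hxU⟩
  refine measure_mono_null hsub ?_
  exact (measure_sUnion_null_iff hTc).mpr fun s hs => (hTsub hs).2

lemma measSupport_ae {α : Type*} [MeasurableSpace α] [TopologicalSpace α]
    [SecondCountableTopology α] [OpensMeasurableSpace α] (μ : Measure α) :
    ∀ᵐ x ∂μ, x ∈ measSupport μ := by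
  rw [MeasureTheory.ae_iff]
  exact measSupport_compl_null μ

lemma integrable_suppFn [MeasurableSpace (ConvexBody (Euc n))]
    [BorelSpace (ConvexBody (Euc n))]
    (μ : Measure (ConvexBody (Euc n))) [IsProbabilityMeasure μ]
    (hbdd : IsBounded (measSupport μ)) (v : Euc n) :
    Integrable (fun P : ConvexBody (Euc n) => suppFn (P : Set (Euc n)) v) μ := by
  rcases (measSupport μ).eq_empty_or_nonempty with h | ⟨Q₀, hQ₀⟩
  · exfalso
    have h0 := measSupport_compl_null μ
    rw [h, Set.compl_empty] at h0
    simp [measure_univ] at h0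
  · obtain ⟨r, hr⟩ := hbdd.subset_closedBall Q₀
    refine (MeasureTheory.integrable_const
      (|suppFn (Q₀ : Set (Euc n)) v| + ‖v‖ * r)).mono'
      ((suppFn_continuous v).aestronglyMeasurable) ?_
    filter_upwards [measSupport_ae μ] with P hP
    have hdist : dist P Q₀ ≤ r := Metric.mem_closedBall.mp (hr hP)
    have hlip := (suppFn_lipschitz v).dist_le_mul P Q₀
    rw [Real.dist_eq, coe_nnnorm] at hlip
    have h1 := abs_sub_abs_le_abs_sub (suppFn (P : Set (Euc n)) v)
      (suppFn (Q₀ : Set (Euc n)) v)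
    have h2 : ‖v‖ * dist P Q₀ ≤ ‖v‖ * r :=
      mul_le_mul_of_nonneg_left hdist (norm_nonneg v)
    rw [Real.norm_eq_abs]
    linarith

end MacroidAux

end AuxMacroid


/-- A macroid has a `c`-cusp in direction `u` iff every body in the support of its generating
measure has a `c`-cusp in direction `u`. -/
theorem macroid_hasCusp_iff {n : ℕ}
    [MeasurableSpace (ConvexBody (Euc n))] [BorelSpace (ConvexBody (Euc n))]
    (μ : Measure (ConvexBody (Euc n))) [IsProbabilityMeasure μ]
    (hbdd : Bornology.IsBounded (measSupport μ))
    (K : Set (Euc n)) (hKconv : Convex ℝ K) (hKcomp : IsCompact K) (hKne : K.Nonempty)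
    (hgen : ∀ x : Euc n, suppFn K x = ∫ P, suppFn (P : Set (Euc n)) x ∂μ)
    (u : Euc n) (hu : ‖u‖ = 1) (c : ℝ) (hc : 0 < c) :
    HasCusp K c u ↔ ∀ P ∈ measSupport μ, HasCusp (P : Set (Euc n)) c u := by
  classical
  have hint : ∀ v : Euc n, Integrable
      (fun P : ConvexBody (Euc n) => suppFn (P : Set (Euc n)) v) μ :=
    fun v => MacroidAux.integrable_suppFn μ hbdd v
  have hae : ∀ᵐ P ∂μ, P ∈ measSupport μ := MacroidAux.measSupport_ae μ
  rw [MacroidAux.hasCusp_iff_additive hKcomp hKne hc]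
  constructor
  · intro hKadd P₀ hP₀
    rw [MacroidAux.hasCusp_iff_additive P₀.isCompact P₀.nonempty hc]
    intro v₁ h1 v₂ h2
    set g : ConvexBody (Euc n) → ℝ := fun P =>
      suppFn (P : Set (Euc n)) v₁ + suppFn (P : Set (Euc n)) v₂
        - suppFn (P : Set (Euc n)) (v₁ + v₂) with hg
    have hgnonneg : ∀ P, 0 ≤ g P := by
      intro P
      have := MacroidAux.suppFn_add_le P.isCompact.isBounded P.nonempty v₁ v₂
      simp only [hg]
      linarith
    have hgint : Integrable g μ := ((hint v₁).add (hint v₂)).sub (hint (v₁ + v₂))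
    have hgcont : Continuous g :=
      ((MacroidAux.suppFn_continuous v₁).add (MacroidAux.suppFn_continuous v₂)).sub
        (MacroidAux.suppFn_continuous (v₁ + v₂))
    have hgzero : ∫ P, g P ∂μ = 0 := by
      have hsplit : ∫ P, g P ∂μ = ((∫ P, suppFn (P : Set (Euc n)) v₁ ∂μ)
          + ∫ P, suppFn (P : Set (Euc n)) v₂ ∂μ)
          - ∫ P, suppFn (P : Set (Euc n)) (v₁ + v₂) ∂μ := by
        have hA := integral_sub ((hint v₁).add (hint v₂)) (hint (v₁ + v₂))
        have hB := integral_add (hint v₁) (hint v₂)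
        simp only [Pi.add_apply] at hA
        rw [hB] at hA
        exact hA
      rw [hsplit]
      have e1 := hgen v₁
      have e2 := hgen v₂
      have e3 := hgen (v₁ + v₂)
      have e4 := hKadd v₁ h1 v₂ h2
      rw [← e1, ← e2, ← e3]
      linarith
    by_contra hne0
    have hgP₀ : 0 < g P₀ := by
      rcases lt_or_eq_of_le (hgnonneg P₀) with h | h
      · exact h
      · exfalso; apply hne0; simp only [hg] at h; linarith
    set U := g ⁻¹' (Set.Ioi (g P₀ / 2)) with hU
    have hUopen : IsOpen U := (isOpen_Ioi).preimage hgcont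
    have hμU : 0 < μ U := hP₀ U hUopen (Set.mem_preimage.mpr (Set.mem_Ioi.mpr (half_lt_self hgP₀)))
    have hUmeas : MeasurableSet U := hUopen.measurableSet
    have hfin : μ U ≠ ⊤ := measure_ne_top μ U
    have h1' : g P₀ / 2 * (μ U).toReal ≤ ∫ P in U, g P ∂μ :=
      setIntegral_ge_of_const_le_real hUmeas hfin
        (fun x hx => le_of_lt (by exact hx)) hgint.integrableOn
    have h2' : ∫ P in U, g P ∂μ ≤ ∫ P, g P ∂μ :=
      setIntegral_le_integral hgint (Filter.Eventually.of_forall hgnonneg)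
    have h3' : 0 < (μ U).toReal := ENNReal.toReal_pos hμU.ne' hfin
    nlinarith [mul_pos (half_pos hgP₀) h3']
  · intro hP v₁ h1 v₂ h2
    have hPadd : ∀ᵐ P : ConvexBody (Euc n) ∂μ, suppFn (P : Set (Euc n)) (v₁ + v₂)
        = suppFn (P : Set (Euc n)) v₁ + suppFn (P : Set (Euc n)) v₂ := by
      filter_upwards [hae] with P hPsupp
      exact (MacroidAux.hasCusp_iff_additive P.isCompact P.nonempty hc).mp
        (hP P hPsupp) v₁ h1 v₂ h2
    simp only [hgen]
    rw [← integral_add (hint v₁) (hint v₂)]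
    exact integral_congr_ae hPadd
end
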